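/- If X_1, ..., X_N are Bernoulli (0/1-valued) random variables satisfying X_1 + ... + X_N = 1 pointwise, then they are negatively associated: for all disjoint index sets I, J and all functions f, g that are both coordinatewise monotone increasing (or both decreasing), E[f(X_i, i∈I) · g(X_j, j∈J)] ≤ E[f(X_i, i∈I)] · E[g(X_j, j∈J)]. -/

import Mathlib

/-!
At every outcome exactly one `X k` equals `1`, so the vector `(X i)ᵢ` is a standard basis
vector `eₖ`. Hence, writing `a = f 0` and `b = g 0`, the deviations `f(X_I) - a` and
`g(X_J) - b` are never nonzero at the same outcome: if `k ∈ I` then `X_J = 0`, otherwise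
`X_I = 0`. Their product vanishes, which makes `E[fg] - E[f] E[g] = -(E[f] - a)(E[g] - b)`,
and both factors have the sign of the (common) direction of monotonicity.
-/

open MeasureTheory

/-- A family of real random variables is negatively associated if for all disjoint
finite index sets `I, J` and all coordinatewise monotone functions `f, g` (both
increasing, or both decreasing), `E[f·g] ≤ E[f]·E[g]`. -/
def NegativelyAssociated {Ω : Type*} [MeasurableSpace Ω] (μ : Measure Ω)
    {ι : Type*} (X : ι → Ω → ℝ) : Prop :=
  ∀ (I J : Finset ι), Disjoint I J →
    ∀ (f : ((i : I) → ℝ) → ℝ) (g : ((j : J) → ℝ) → ℝ),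
      ((Monotone f ∧ Monotone g) ∨ (Antitone f ∧ Antitone g)) →
      ∫ ω, f (fun i => X i ω) * g (fun j => X j ω) ∂μ ≤
        (∫ ω, f (fun i => X i ω) ∂μ) * (∫ ω, g (fun j => X j ω) ∂μ)

lemma exists_eq_single_of_sum_eq_one {ι : Type*} [Fintype ι] [DecidableEq ι] {x : ι → ℝ}
    (hx : ∀ i, x i = 0 ∨ x i = 1) (hsum : ∑ i, x i = 1) : ∃ k, x = Pi.single k 1 := by
  obtain ⟨k, -, hk⟩ := Finset.exists_ne_zero_of_sum_ne_zero (hsum.trans_ne one_ne_zero)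
  have hk1 : x k = 1 := (hx k).resolve_left hk
  have hrest : ∑ i ∈ Finset.univ.erase k, x i = 0 := by
    linarith [Finset.add_sum_erase Finset.univ x (Finset.mem_univ k)]
  have hnonneg : ∀ i ∈ Finset.univ.erase k, 0 ≤ x i := fun i _ ↦ by
    rcases hx i with h | h <;> simp [h]
  refine ⟨k, funext fun i ↦ ?_⟩
  rcases eq_or_ne i k with rfl | hik
  · simp [hk1]
  · rw [Pi.single_eq_of_ne hik]
    exact (Finset.sum_eq_zero_iff_of_nonneg hnonneg).1 hrest i (by simp [hik])

lemma apply_eq_sum_mul_apply_single {ι R : Type*} [Fintype ι] [DecidableEq ι] [Semiring R]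
    (φ : (ι → R) → R) (k : ι) :
    φ (Pi.single k 1) = ∑ i, (Pi.single k 1 : ι → R) i * φ (Pi.single i 1) := by
  simp [Pi.single_apply]

lemma restrict_single_eq_zero {ι R : Type*} [DecidableEq ι] [Zero R] {K : Finset ι} {k : ι}
    (hk : k ∉ K) (r : R) : (fun i : K ↦ (Pi.single k r : ι → R) i) = 0 :=
  funext fun i ↦ Pi.single_eq_of_ne (fun h : (i : ι) = k ↦ hk (h ▸ i.2)) _

lemma sub_mul_sub_restrict_single_eq_zero {ι R S : Type*} [DecidableEq ι] [Zero R]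
    [NonUnitalNonAssocRing S] {I J : Finset ι} (hIJ : Disjoint I J) (f : (I → R) → S)
    (g : (J → R) → S) (k : ι) (r : R) :
    (f (fun i ↦ (Pi.single k r : ι → R) i) - f 0) *
      (g (fun j ↦ (Pi.single k r : ι → R) j) - g 0) = 0 := by
  by_cases hkI : k ∈ I
  · rw [restrict_single_eq_zero (Finset.disjoint_left.1 hIJ hkI), sub_self, mul_zero]
  · rw [restrict_single_eq_zero hkI, sub_self, zero_mul]

section

variable {Ω : Type*} [MeasurableSpace Ω] {μ : Measure Ω}

/-- `φ` need not be measurable: on basis vectors it agrees with a linear function. -/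
lemma integrable_apply_of_forall_eq_single {ι : Type*} [Fintype ι] [DecidableEq ι]
    {X : ι → Ω → ℝ}
    (hX : ∀ i, Integrable (X i) μ) (hsingle : ∀ ω, ∃ k, (fun i ↦ X i ω) = Pi.single k 1)
    (φ : (ι → ℝ) → ℝ) : Integrable (fun ω ↦ φ (fun i ↦ X i ω)) μ := by
  have hφ : (fun ω ↦ φ (fun i ↦ X i ω)) = fun ω ↦ ∑ i, X i ω * φ (Pi.single i 1) := by
    funext ω
    obtain ⟨k, hk⟩ := hsingle ω
    rw [hk, apply_eq_sum_mul_apply_single φ k]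
    exact Finset.sum_congr rfl fun i _ ↦ by rw [← hk]
  rw [hφ]
  exact integrable_finsetSum _ fun i _ ↦ (hX i).mul_const _

variable [IsProbabilityMeasure μ]

lemma integral_mul_le_mul_integral_of_sub_mul_sub_eq_zero {u v : Ω → ℝ} (a b : ℝ)
    (hu : Integrable u μ) (hv : Integrable v μ) (huv : ∀ ω, (u ω - a) * (v ω - b) = 0)
    (hsign : 0 ≤ ((∫ ω, u ω ∂μ) - a) * ((∫ ω, v ω ∂μ) - b)) :
    ∫ ω, u ω * v ω ∂μ ≤ (∫ ω, u ω ∂μ) * ∫ ω, v ω ∂μ := by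
  have hlin : (fun ω ↦ u ω * v ω) = fun ω ↦ a * v ω + b * u ω - a * b := by
    funext ω
    linear_combination huv ω
  have hint : Integrable (fun ω ↦ a * v ω + b * u ω) μ := (hv.const_mul a).add (hu.const_mul b)
  rw [hlin, integral_sub hint (integrable_const _),
    integral_add (hv.const_mul a) (hu.const_mul b), integral_const_mul, integral_const_mul,
    integral_const, probReal_univ, one_smul]
  linarith

lemma le_integral_of_forall_le {u : Ω → ℝ} {a : ℝ} (hu : Integrable u μ) (h : ∀ ω, a ≤ u ω) :
    a ≤ ∫ ω, u ω ∂μ := by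
  simpa using integral_mono (integrable_const a) hu h

lemma integral_le_of_forall_le {u : Ω → ℝ} {a : ℝ} (hu : Integrable u μ) (h : ∀ ω, u ω ≤ a) :
    ∫ ω, u ω ∂μ ≤ a := by
  simpa using integral_mono hu (integrable_const a) h

end

/-- Bernoulli (0/1-valued) random variables summing pointwise to `1` are
negatively associated. -/
theorem negativelyAssociated_of_sum_eq_one
    {Ω : Type*} [MeasurableSpace Ω] (μ : Measure Ω) [IsProbabilityMeasure μ]
    (N : ℕ) (X : Fin N → Ω → ℝ)
    (hmeas : ∀ i, Measurable (X i))
    (hBer : ∀ i ω, X i ω = 0 ∨ X i ω = 1)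
    (hsum : ∀ ω, ∑ i, X i ω = 1) :
    NegativelyAssociated μ X := by
  intro I J hIJ f g hfg
  have hsingle (ω : Ω) : ∃ k, (fun i ↦ X i ω) = Pi.single k 1 :=
    exists_eq_single_of_sum_eq_one (hBer · ω) (hsum ω)
  have hX (i : Fin N) : Integrable (X i) μ :=
    .of_bound (hmeas i).aestronglyMeasurable 1 <| .of_forall fun ω ↦ by
      rcases hBer i ω with h | h <;> simp [h]
  have hint {K : Finset (Fin N)} (h : (K → ℝ) → ℝ) :
      Integrable (fun ω ↦ h (fun i : K ↦ X i ω)) μ :=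
    integrable_apply_of_forall_eq_single hX hsingle fun x ↦ h fun i ↦ x i
  have hnonneg (K : Finset (Fin N)) (ω : Ω) : (0 : K → ℝ) ≤ fun i : K ↦ X i ω := fun i ↦ by
    simp only [Pi.zero_apply]
    rcases hBer i ω with h | h <;> simp [h]
  refine integral_mul_le_mul_integral_of_sub_mul_sub_eq_zero (f 0) (g 0) (hint f) (hint g)
    (fun ω ↦ ?_) ?_
  · obtain ⟨k, hk⟩ := hsingle ω
    simpa only [← hk] using sub_mul_sub_restrict_single_eq_zero hIJ f g k (1 : ℝ)
  rcases hfg with ⟨hf, hg⟩ | ⟨hf, hg⟩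
  · exact mul_nonneg
      (sub_nonneg.2 <| le_integral_of_forall_le (hint f) fun ω ↦ hf (hnonneg I ω))
      (sub_nonneg.2 <| le_integral_of_forall_le (hint g) fun ω ↦ hg (hnonneg J ω))
  · exact mul_nonneg_of_nonpos_of_nonpos
      (sub_nonpos.2 <| integral_le_of_forall_le (hint f) fun ω ↦ hf (hnonneg I ω))
      (sub_nonpos.2 <| integral_le_of_forall_le (hint g) fun ω ↦ hg (hnonneg J ω))
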